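/- arXiv:1712.07743 — 2 statements merged into one kernel-verified Lean document; each statement's English description precedes it below -/
import Mathlib

section
/- The category ℂ_rn of conditions and injective variable substitutions does not have all equalizers: over a signature with a single unary predicate symbol (or even empty signature), the two morphisms [x:=y] and [x:=z] from ({y,z}; ∅) to ({x}; ∅) have no equalizer in ℂ_rn. -/
/- STATEMENT 7: The category ℂ_rn of conditions and injective variable substitutions
(over the empty relational signature) does not have all equalizers: the two parallel
morphisms [x:=y], [x:=z] : ({y,z};∅) ⇉ ({x};∅) have no equalizer. -/

open CategoryTheory CategoryTheory.Limits

/-- An atom over variables from `V`, for the empty signature (there are none). -/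
abbrev Atm (V : Type) : Type := (r : Empty) × (Fin (Empty.elim r) → V)

/-- Applying a variable substitution to an atom. -/
def mapAtm {V W : Type} (f : V → W) (a : Atm V) : Atm W :=
  ⟨a.1, f ∘ a.2⟩

/-- A condition (X;A) over the empty signature. -/
structure CndRn : Type 1 where
  V : Type
  finV : Finite V
  A : Set (Atm V)
  finA : A.Finite

/-- Morphisms of ℂ_rn: injective variable substitutions f : X → Y with Af ⊆ B. -/
instance : Category CndRn where
  Hom P Q := {f : Q.V → P.V // Function.Injective f ∧ ∀ a ∈ Q.A, mapAtm f a ∈ P.A}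
  id P := ⟨id, fun _ _ h => h, fun _ ha => ha⟩
  comp u v := ⟨u.1 ∘ v.1, (u.2.1.comp v.2.1), fun a ha => u.2.2 _ (v.2.2 a ha)⟩
  id_comp := by intros; rfl
  comp_id := by intros; rfl
  assoc := by intros; rfl

/-- The condition ({y,z};∅), with two variables. -/
def cndYZ : CndRn := ⟨Bool, inferInstance, ∅, Set.finite_empty⟩

/-- The condition ({x};∅), with one variable. -/
def cndX : CndRn := ⟨Unit, inferInstance, ∅, Set.finite_empty⟩

/-- The renaming [x := y]. -/
def substY : cndYZ ⟶ cndX :=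
  ⟨fun _ => true, fun _ _ _ => rfl, fun a ha => ha.elim⟩

/-- The renaming [x := z]. -/
def substZ : cndYZ ⟶ cndX :=
  ⟨fun _ => false, fun _ _ _ => rfl, fun a ha => ha.elim⟩

/-- ℂ_rn does not have an equalizer of [x:=y] and [x:=z]. -/
theorem renamings_no_equalizer : ¬ HasEqualizer substY substZ := by
  intro h
  have hc := equalizer.condition substY substZ
  have h2 : (equalizer.ι substY substZ).1 true = (equalizer.ι substY substZ).1 false :=
    congrFun (congrArg Subtype.val hc) ()
  exact Bool.noConfusion ((equalizer.ι substY substZ).2.1 h2)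
end

section
/- Local character of provability: let T be a coherent theory with its inductively generated cover relation ◁_T on conditions. If (X;A) ◁_T U and ψ is a formula with free variables in X such that T, B ⊢_Y ψf for every f : (Y;B) → (X;A) in U, then T, A ⊢_X ψ. -/
namespace CoherentForcing

/- ## Syntax: terms, atoms, conditions, substitutions -/

/-- Ground terms over a signature of function symbols `F` with arities `far`,
with named variables in ℕ. -/
inductive Tm (F : Type) (far : F → ℕ) : Type
  | fvar (x : ℕ) : Tm F far
  | app (f : F) (a : Fin (far f) → Tm F far) : Tm F far

variable {F : Type} {far : F → ℕ} {R : Type} {rar : R → ℕ}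

/-- Free variables of a ground term. -/
def Tm.fv : Tm F far → Set ℕ
  | .fvar x => {x}
  | .app _ a => ⋃ i, (a i).fv

/-- Applying a substitution to a ground term. -/
def Tm.subst (σ : ℕ → Tm F far) : Tm F far → Tm F far
  | .fvar x => σ x
  | .app f a => .app f fun i => (a i).subst σ

/-- Atoms over relation symbols `R` with arities `rar`. -/
abbrev Atom (F : Type) (far : F → ℕ) (R : Type) (rar : R → ℕ) : Type :=
  (r : R) × (Fin (rar r) → Tm F far)

/-- Free variables of an atom. -/
def Atom.fv (a : Atom F far R rar) : Set ℕ := ⋃ i, (a.2 i).fv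

/-- Applying a substitution to an atom. -/
def Atom.subst (σ : ℕ → Tm F far) (a : Atom F far R rar) : Atom F far R rar :=
  ⟨a.1, fun i => (a.2 i).subst σ⟩

/-- A forcing condition (X;A): a finite set X of variables together with a finite
set A of atoms whose variables lie in X. -/
structure Cond (F : Type) (far : F → ℕ) (R : Type) (rar : R → ℕ) : Type where
  X : Finset ℕ
  A : Set (Atom F far R rar)
  finA : A.Finite
  wf : ∀ a ∈ A, Atom.fv a ⊆ ↑X

/-- The three categories of forcing conditions: renamings, variable substitutions,
term substitutions. -/
inductive MC | rn | vs | ts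

/-- `Mor mc D C σ`: the substitution `σ` is a morphism `D ⟶ C` of conditions in the
category determined by `mc`. -/
structure Mor (mc : MC) (D C : Cond F far R rar) (σ : ℕ → Tm F far) : Prop where
  fvsub : ∀ x ∈ C.X, (σ x).fv ⊆ ↑D.X
  atoms : ∀ a ∈ C.A, Atom.subst σ a ∈ D.A
  cls : match mc with
    | .ts => True
    | .vs => ∀ x ∈ C.X, ∃ y, σ x = Tm.fvar y
    | .rn => (∀ x ∈ C.X, ∃ y, σ x = Tm.fvar y) ∧ Set.InjOn σ ↑C.X

/-- `σ` is an isomorphism of conditions `D ≅ C` (a bijective renaming). -/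
def IsIsoMor (D C : Cond F far R rar) (σ : ℕ → Tm F far) : Prop :=
  Mor .rn D C σ ∧ ∃ τ : ℕ → Tm F far, Mor .rn C D τ ∧
    (∀ x ∈ C.X, (σ x).subst τ = Tm.fvar x) ∧ (∀ y ∈ D.X, (τ y).subst σ = Tm.fvar y)

/-- A sink: a set of pairs (domain condition, substitution), thought of as a family of
morphisms into a fixed condition. -/
abbrev Sink (F : Type) (far : F → ℕ) (R : Type) (rar : R → ℕ) : Type :=
  Set (Cond F far R rar × (ℕ → Tm F far))

/- ## Formulas (infinitary first-order, locally nameless: named free variables,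
de Bruijn indices for bound variables, the variable bound by the nearest enclosing
binder being the *last* index) -/

/-- Terms in context `n`: named free variables plus `n` de Bruijn indices. -/
inductive Tmc (F : Type) (far : F → ℕ) (n : ℕ) : Type
  | fvar (x : ℕ) : Tmc F far n
  | bvar (i : Fin n) : Tmc F far n
  | app (f : F) (a : Fin (far f) → Tmc F far n) : Tmc F far n

/-- A ground term is a term in any context. -/
def Tm.toTmc {n : ℕ} : Tm F far → Tmc F far n
  | .fvar x => .fvar x
  | .app f a => .app f fun i => (a i).toTmc

/-- Evaluating a term in context via `σ` on free variables and `ρ` on indices. -/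
def Tmc.eval (σ : ℕ → Tm F far) {n : ℕ} (ρ : Fin n → Tm F far) :
    Tmc F far n → Tm F far
  | .fvar x => σ x
  | .bvar i => ρ i
  | .app f a => .app f fun i => (a i).eval σ ρ

/-- Named free variables of a term in context. -/
def Tmc.fv {n : ℕ} : Tmc F far n → Set ℕ
  | .fvar x => {x}
  | .bvar _ => ∅
  | .app _ a => ⋃ i, (a i).fv

/-- A term in context has no named free variables. -/
def Tmc.noFvar {n : ℕ} : Tmc F far n → Prop
  | .fvar _ => False
  | .bvar _ => True
  | .app _ a => ∀ i, (a i).noFvar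

/-- Applying a substitution to the named free variables of a term in context. -/
def Tmc.substFv (σ : ℕ → Tm F far) {n : ℕ} : Tmc F far n → Tmc F far n
  | .fvar x => (σ x).toTmc
  | .bvar i => .bvar i
  | .app f a => .app f fun i => (a i).substFv σ

/-- (Possibly infinitary) first-order formulas in context `n`. -/
inductive Fml (F : Type) (far : F → ℕ) (R : Type) (rar : R → ℕ) : ℕ → Type 1
  | atom {n : ℕ} (r : R) (ts : Fin (rar r) → Tmc F far n) : Fml F far R rar n
  | eq {n : ℕ} (s t : Tmc F far n) : Fml F far R rar n
  | top {n : ℕ} : Fml F far R rar n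
  | bot {n : ℕ} : Fml F far R rar n
  | conj {n : ℕ} : Fml F far R rar n → Fml F far R rar n → Fml F far R rar n
  | disj {n : ℕ} (I : Type) (f : I → Fml F far R rar n) : Fml F far R rar n
  | imp {n : ℕ} : Fml F far R rar n → Fml F far R rar n → Fml F far R rar n
  | all {n : ℕ} : Fml F far R rar (n + 1) → Fml F far R rar n
  | ex {n : ℕ} : Fml F far R rar (n + 1) → Fml F far R rar n

/-- Negation. -/
abbrev Fml.neg {n : ℕ} (φ : Fml F far R rar n) : Fml F far R rar n := .imp φ .bot

/-- Named free variables of a formula. -/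
def Fml.fv : {n : ℕ} → Fml F far R rar n → Set ℕ
  | _, .atom _ ts => ⋃ i, (ts i).fv
  | _, .eq s t => s.fv ∪ t.fv
  | _, .top => ∅
  | _, .bot => ∅
  | _, .conj φ ψ => φ.fv ∪ ψ.fv
  | _, .disj _ f => ⋃ i, (f i).fv
  | _, .imp φ ψ => φ.fv ∪ ψ.fv
  | _, .all φ => φ.fv
  | _, .ex φ => φ.fv

/-- Applying a substitution to the named free variables of a formula. -/
def Fml.substFv (σ : ℕ → Tm F far) : {n : ℕ} → Fml F far R rar n → Fml F far R rar n
  | _, .atom r ts => .atom r fun i => (ts i).substFv σ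
  | _, .eq s t => .eq (s.substFv σ) (t.substFv σ)
  | _, .top => .top
  | _, .bot => .bot
  | _, .conj φ ψ => .conj (φ.substFv σ) (ψ.substFv σ)
  | _, .disj I f => .disj I fun i => (f i).substFv σ
  | _, .imp φ ψ => .imp (φ.substFv σ) (ψ.substFv σ)
  | _, .all φ => .all (φ.substFv σ)
  | _, .ex φ => .ex (φ.substFv σ)

/-- Shifting de Bruijn indices of a term into an extended context. -/
def Tmc.shift {k : ℕ} : Tmc F far k → Tmc F far (k + 1)
  | .fvar x => .fvar x
  | .bvar i => .bvar i.castSucc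
  | .app f a => .app f fun i => (a i).shift

/-- Simultaneous substitution for the de Bruijn indices of a term. -/
def Tmc.bsubst {m k : ℕ} (θ : Fin m → Tmc F far k) : Tmc F far m → Tmc F far k
  | .fvar x => .fvar x
  | .bvar i => θ i
  | .app f a => .app f fun i => (a i).bsubst θ

/-- Extending a de Bruijn substitution under a binder. -/
def extendB {m k : ℕ} (θ : Fin m → Tmc F far k) : Fin (m + 1) → Tmc F far (k + 1) :=
  Fin.snoc (fun i => (θ i).shift) (.bvar (Fin.last k))

/-- Simultaneous substitution for the de Bruijn indices of a formula. -/
def Fml.bsubst : {m k : ℕ} → (Fin m → Tmc F far k) → Fml F far R rar m → Fml F far R rar k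
  | _, _, θ, .atom r ts => .atom r fun i => (ts i).bsubst θ
  | _, _, θ, .eq s t => .eq (s.bsubst θ) (t.bsubst θ)
  | _, _, _, .top => .top
  | _, _, _, .bot => .bot
  | _, _, θ, .conj φ ψ => .conj (φ.bsubst θ) (ψ.bsubst θ)
  | _, _, θ, .disj I f => .disj I fun i => (f i).bsubst θ
  | _, _, θ, .imp φ ψ => .imp (φ.bsubst θ) (ψ.bsubst θ)
  | _, _, θ, .all φ => .all (φ.bsubst (extendB θ))
  | _, _, θ, .ex φ => .ex (φ.bsubst (extendB θ))

/-- Opening the outermost binder of a one-variable formula with a ground term. -/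
def Fml.open0 (t : Tm F far) (φ : Fml F far R rar 1) : Fml F far R rar 0 :=
  φ.bsubst fun _ => t.toTmc

/- ## Coherent theories and the generated coverage -/

/-- Atoms in context `n` (for the components of coherent axioms). -/
abbrev CAtom (F : Type) (far : F → ℕ) (R : Type) (rar : R → ℕ) (n : ℕ) : Type :=
  (r : R) × (Fin (rar r) → Tmc F far n)

/-- Instantiating an atom in context `m` by an assignment of its de Bruijn variables. -/
def CAtom.inst {m : ℕ} (ι : Fin m → Tm F far) (a : CAtom F far R rar m) :
    Atom F far R rar :=
  ⟨a.1, fun i => (a.2 i).eval Tm.fvar ι⟩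

/-- A coherent axiom ∀ x₁…x_m (φ₀ → ⋁_d ∃ y₁…y_{k_d}. φ_d), where the φ's are finite
conjunctions of atoms (as lists), presented without named free variables. -/
structure CohAx (F : Type) (far : F → ℕ) (R : Type) (rar : R → ℕ) : Type where
  m : ℕ
  hyp : List (CAtom F far R rar m)
  concl : List ((k : ℕ) × List (CAtom F far R rar (m + k)))
  hypClosed : ∀ a ∈ hyp, ∀ i, (a.2 i).noFvar
  conclClosed : ∀ d ∈ concl, ∀ a ∈ d.2, ∀ i, (a.2 i).noFvar

/-- The `j`-th fresh variable not occurring in the condition `C`. -/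
def freshVar (C : Cond F far R rar) (j : ℕ) : ℕ := C.X.sup id + 1 + j

lemma Tm.fv_eval {n : ℕ} (ι : Fin n → Tm F far) (t : Tmc F far n) (ht : t.noFvar) :
    (t.eval Tm.fvar ι).fv ⊆ ⋃ j, (ι j).fv := by
  induction t with
  | fvar x => exact absurd ht id
  | bvar i => exact Set.subset_iUnion (fun j => (ι j).fv) i
  | app f a ih =>
    intro y hy
    obtain ⟨i, hi⟩ := Set.mem_iUnion.mp hy
    exact ih i (ht i) hi

/-- The extension (X, y⃗; A, φ_d) of a condition by one disjunct of an instantiated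
coherent axiom, using fresh variables y⃗ for the existentially bound variables. -/
def Cond.extend (C : Cond F far R rar) {m k : ℕ} (ι : Fin m → Tm F far)
    (hι : ∀ i, (ι i).fv ⊆ ↑C.X) (ats : List (CAtom F far R rar (m + k)))
    (hats : ∀ a ∈ ats, ∀ i, (a.2 i).noFvar) : Cond F far R rar where
  X := C.X ∪ Finset.image (fun j : Fin k => freshVar C j) Finset.univ
  A := C.A ∪ (CAtom.inst (Fin.append ι fun j : Fin k => Tm.fvar (freshVar C j))) ''
        {a | a ∈ ats}
  finA := C.finA.union (ats.finite_toSet.image _)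
  wf := by
    rintro a (ha | ⟨b, hb, rfl⟩)
    · exact (C.wf a ha).trans (by intro y hy; simp only [Finset.coe_union]; exact Or.inl hy)
    · intro y hy
      obtain ⟨i, hi⟩ := Set.mem_iUnion.mp hy
      obtain ⟨j, hj⟩ := Set.mem_iUnion.mp (Tm.fv_eval _ _ (hats b hb i) hi)
      simp only [Finset.coe_union, Finset.coe_image, Set.mem_union]
      revert hj
      refine Fin.addCases (fun i0 hj => ?_) (fun j0 hj => ?_) j
      · rw [Fin.append_left] at hj
        exact Or.inl (hι i0 hj)
      · rw [Fin.append_right] at hj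
        rcases hj with rfl
        exact Or.inr ⟨j0, Finset.mem_coe.mpr (Finset.mem_univ j0), rfl⟩

/-- The coverage ◁_T generated by a coherent theory `T`: isomorphism singletons are
covers, and for each instance of an axiom of `T` applicable at `C`, the union of
covers of the extensions of `C` by the disjuncts is a cover of `C` (the connecting
morphisms being the identity substitutions). -/
inductive Cov (T : Set (CohAx F far R rar)) :
    Cond F far R rar → Sink F far R rar → Prop
  | iso {C D : Cond F far R rar} {σ : ℕ → Tm F far} (h : IsIsoMor D C σ) :
      Cov T C {(D, σ)}
  | step {C : Cond F far R rar} (ax : CohAx F far R rar) (hax : ax ∈ T)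
      (ι : Fin ax.m → Tm F far) (hι : ∀ i, (ι i).fv ⊆ ↑C.X)
      (hhyp : ∀ a ∈ ax.hyp, CAtom.inst ι a ∈ C.A)
      (U : Fin ax.concl.length → Sink F far R rar)
      (hU : ∀ i : Fin ax.concl.length,
        Cov T (C.extend ι hι (ax.concl.get i).2
            (fun a ha j => ax.conclClosed _ (List.get_mem _ i) a ha j))
          (U i)) :
      Cov T C (⋃ i, U i)

/- ## The forcing relation -/

/-- The forcing relation `C ⊩ φ[σ, ρ]`, where `mc` determines the category of
conditions (renamings / variable substitutions / term substitutions), `cov` is a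
coverage, `σ` interprets the named free variables and `ρ` the de Bruijn variables
of `φ` by terms over `C`. -/
def Forces (mc : MC) (cov : Cond F far R rar → Sink F far R rar → Prop) :
    {n : ℕ} → Cond F far R rar → (ℕ → Tm F far) → (Fin n → Tm F far) →
      Fml F far R rar n → Prop
  | _, C, σ, ρ, .atom r ts => ∃ U, cov C U ∧ ∀ p ∈ U,
      (⟨r, fun i => ((ts i).eval σ ρ).subst p.2⟩ : Atom F far R rar) ∈ p.1.A
  | _, C, σ, ρ, .eq s t => ∃ U, cov C U ∧ ∀ p ∈ U,
      (s.eval σ ρ).subst p.2 = (t.eval σ ρ).subst p.2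
  | _, _, _, _, .top => True
  | _, C, _, _, .bot => cov C ∅
  | _, C, σ, ρ, .conj φ ψ => Forces mc cov C σ ρ φ ∧ Forces mc cov C σ ρ ψ
  | _, C, σ, ρ, .disj _ f => ∃ U, cov C U ∧ ∀ p ∈ U, ∃ i,
      Forces mc cov p.1 (fun x => (σ x).subst p.2) (fun i0 => (ρ i0).subst p.2) (f i)
  | _, C, σ, ρ, .imp φ ψ => ∀ D τ, Mor mc D C τ →
      Forces mc cov D (fun x => (σ x).subst τ) (fun i => (ρ i).subst τ) φ →
      Forces mc cov D (fun x => (σ x).subst τ) (fun i => (ρ i).subst τ) ψ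
  | _, C, σ, ρ, .all φ => ∀ D τ, Mor mc D C τ → ∀ t : Tm F far, t.fv ⊆ ↑D.X →
      Forces mc cov D (fun x => (σ x).subst τ)
        (Fin.snoc (fun i => (ρ i).subst τ) t) φ
  | _, C, σ, ρ, .ex φ => ∃ U, cov C U ∧ ∀ p ∈ U, ∃ t, t.fv ⊆ ↑p.1.X ∧
      Forces mc cov p.1 (fun x => (σ x).subst p.2)
        (Fin.snoc (fun i => (ρ i).subst p.2) t) φ

/- ## Provability -/

/-- Intuitionistic (or, when `em` holds, classical) provability `Γ ⊢_X φ` in logic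
without equality, sound for empty domains: `X` is the set of free variables allowed
in the derivation. -/
inductive Prv (em : Prop) :
    Finset ℕ → Set (Fml F far R rar 0) → Fml F far R rar 0 → Prop
  | ax {X Γ φ} (h : φ ∈ Γ) : Prv em X Γ φ
  | topI {X Γ} : Prv em X Γ .top
  | botE {X Γ φ} : Prv em X Γ .bot → Prv em X Γ φ
  | conjI {X Γ φ ψ} : Prv em X Γ φ → Prv em X Γ ψ → Prv em X Γ (.conj φ ψ)
  | conjE1 {X Γ φ ψ} : Prv em X Γ (.conj φ ψ) → Prv em X Γ φ
  | conjE2 {X Γ φ ψ} : Prv em X Γ (.conj φ ψ) → Prv em X Γ ψ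
  | disjI {X Γ I} {f : I → Fml F far R rar 0} (i : I) :
      Prv em X Γ (f i) → Prv em X Γ (.disj I f)
  | disjE {X Γ I} {f : I → Fml F far R rar 0} {ψ} :
      Prv em X Γ (.disj I f) → (∀ i, Prv em X (insert (f i) Γ) ψ) → Prv em X Γ ψ
  | impI {X Γ φ ψ} : Prv em X (insert φ Γ) ψ → Prv em X Γ (.imp φ ψ)
  | impE {X Γ φ ψ} : Prv em X Γ (.imp φ ψ) → Prv em X Γ φ → Prv em X Γ ψ
  | allI {X : Finset ℕ} {Γ} {φ} (x : ℕ) (hx : x ∉ X) (hφ : x ∉ Fml.fv (.all φ))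
      (hΓ : ∀ ψ ∈ Γ, x ∉ Fml.fv ψ) :
      Prv em (insert x X) Γ (Fml.open0 (.fvar x) φ) → Prv em X Γ (.all φ)
  | allE {X : Finset ℕ} {Γ} {φ} (t : Tm F far) (ht : t.fv ⊆ ↑X) :
      Prv em X Γ (.all φ) → Prv em X Γ (Fml.open0 t φ)
  | exI {X : Finset ℕ} {Γ} {φ} (t : Tm F far) (ht : t.fv ⊆ ↑X) :
      Prv em X Γ (Fml.open0 t φ) → Prv em X Γ (.ex φ)
  | exE {X : Finset ℕ} {Γ} {φ} {ψ} (x : ℕ) (hx : x ∉ X) (hφ : x ∉ Fml.fv (.ex φ)) (hψ : x ∉ Fml.fv ψ)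
      (hΓ : ∀ χ ∈ Γ, x ∉ Fml.fv χ) :
      Prv em X Γ (.ex φ) →
      Prv em (insert x X) (insert (Fml.open0 (.fvar x) φ) Γ) ψ → Prv em X Γ ψ
  | em {X Γ} (φ : Fml F far R rar 0) (h : em) :
      Prv em X Γ (.disj Bool fun b => bif b then φ else φ.neg)

/- ## Coherent axioms as formulas -/

/-- An atom of a condition, as a closed formula. -/
def atomF (a : Atom F far R rar) : Fml F far R rar 0 :=
  .atom a.1 fun i => (a.2 i).toTmc

/-- Universal closure. -/
def Fml.alls : (m : ℕ) → Fml F far R rar m → Fml F far R rar 0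
  | 0, φ => φ
  | m + 1, φ => Fml.alls m (.all φ)

/-- Iterated existential quantification. -/
def Fml.exs {m : ℕ} : (k : ℕ) → Fml F far R rar (m + k) → Fml F far R rar m
  | 0, φ => φ
  | k + 1, φ => Fml.exs k (.ex φ)

/-- Conjunction of a list of atoms in context. -/
def listConj {n : ℕ} (l : List (CAtom F far R rar n)) : Fml F far R rar n :=
  l.foldr (fun a ψ => .conj (.atom a.1 a.2) ψ) .top

/-- A coherent axiom as a sentence: ∀ x⃗ (φ₀ → ⋁_d ∃ y⃗_d. φ_d). -/
def CohAx.toFml (ax : CohAx F far R rar) : Fml F far R rar 0 :=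
  .alls ax.m (.imp (listConj ax.hyp)
    (.disj (Fin ax.concl.length) fun i =>
      .exs (ax.concl.get i).1 (listConj (ax.concl.get i).2)))

/- ## Classes of formulas -/

/-- Generalized geometric implications (in logic without equality):
φ ::= α | φ₁ ∧ φ₂ | ⋁ᵢ φᵢ | ∃x.φ | ∀x.φ | (α → φ) with α an atom, ⊤ or ⊥. -/
inductive GGI : {n : ℕ} → Fml F far R rar n → Prop
  | atom {n r ts} : GGI (n := n) (.atom r ts)
  | top {n} : GGI (n := n) .top
  | bot {n} : GGI (n := n) .bot
  | conj {n} {φ ψ : Fml F far R rar n} : GGI φ → GGI ψ → GGI (.conj φ ψ)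
  | disj {n I} {f : I → Fml F far R rar n} : (∀ i, GGI (f i)) → GGI (.disj I f)
  | ex {n} {φ : Fml F far R rar (n + 1)} : GGI φ → GGI (.ex φ)
  | all {n} {φ : Fml F far R rar (n + 1)} : GGI φ → GGI (.all φ)
  | impAtom {n r ts} {φ : Fml F far R rar n} : GGI φ → GGI (.imp (.atom r ts) φ)
  | impTop {n} {φ : Fml F far R rar n} : GGI φ → GGI (.imp .top φ)
  | impBot {n} {φ : Fml F far R rar n} : GGI φ → GGI (.imp .bot φ)

/-- Positive formulas (no equality): built from atoms, ⊤, ⊥ by ∧, ⋁, ∃. -/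
inductive Pos : {n : ℕ} → Fml F far R rar n → Prop
  | atom {n r ts} : Pos (n := n) (.atom r ts)
  | top {n} : Pos (n := n) .top
  | bot {n} : Pos (n := n) .bot
  | conj {n} {φ ψ : Fml F far R rar n} : Pos φ → Pos ψ → Pos (.conj φ ψ)
  | disj {n I} {f : I → Fml F far R rar n} : (∀ i, Pos (f i)) → Pos (.disj I f)
  | ex {n} {φ : Fml F far R rar (n + 1)} : Pos φ → Pos (.ex φ)

/-- Geometric implications: universally quantified implications between positive
formulas. -/
inductive GeomImp : {n : ℕ} → Fml F far R rar n → Prop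
  | base {n} {φ ψ : Fml F far R rar n} : Pos φ → Pos ψ → GeomImp (Fml.imp φ ψ)
  | all {n} {φ : Fml F far R rar (n + 1)} : GeomImp φ → GeomImp (Fml.all φ)

/-! The proof is by induction on `C ◁_T U`. For an isomorphism singleton `{σ : D ≅ C}`,
substituting the inverse `τ` into the derivation of `ψσ` at `D` gives a derivation of `ψ` at
`C`, because `τ` maps the atoms of `D` to atoms of `C`. For a covering step along an instance
`φ₀ → ⋁ᵢ ∃y⃗ᵢ. φᵢ` of an axiom of `T` with `φ₀ ⊆ A`, the disjunction is derivable at `C`; it is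
eliminated case by case, and `∃y⃗ᵢ. φᵢ` by `∃`-elimination with the fresh variables of the
extension `(X, y⃗ᵢ; A, φᵢ)`. The atoms of that extension are `A` and the conjuncts of `φᵢ`, so
they can be cut from the induction hypothesis there. -/


lemma Tm.subst_congr {σ σ' : ℕ → Tm F far} {t : Tm F far}
    (h : ∀ x ∈ t.fv, σ x = σ' x) : t.subst σ = t.subst σ' := by
  induction t with
  | fvar x => exact h x rfl
  | app f a ih =>
    simp only [Tm.subst, Tm.fv, Set.mem_iUnion] at h ⊢
    exact congrArg _ (funext fun i => ih i fun x hx => h x ⟨i, hx⟩)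

lemma Tm.subst_fvar (t : Tm F far) : t.subst Tm.fvar = t := by
  induction t with
  | fvar x => rfl
  | app f a ih => simp [Tm.subst, ih]

lemma Tm.fv_subst_subset {σ : ℕ → Tm F far} {S : Set ℕ}
    (hσ : ∀ x, (σ x).fv ⊆ S) (t : Tm F far) : (t.subst σ).fv ⊆ S := by
  induction t with
  | fvar x => exact hσ x
  | app f a ih => simpa [Tm.subst, Tm.fv] using ih

lemma fv_update_fvar_subset {σ : ℕ → Tm F far} {X : Finset ℕ} (hσ : ∀ y, (σ y).fv ⊆ X)
    (x x' : ℕ) (y : ℕ) : (Function.update σ x (.fvar x') y).fv ⊆ ↑(insert x' X) := by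
  rcases eq_or_ne y x with rfl | hy
  · simp [Tm.fv]
  · rw [Function.update_of_ne hy, Finset.coe_insert]
    exact (hσ y).trans (Set.subset_insert _ _)

lemma Tmc.fv_toTmc {n : ℕ} (t : Tm F far) : (t.toTmc : Tmc F far n).fv = t.fv := by
  induction t with
  | fvar x => rfl
  | app f a ih => simp [Tm.toTmc, Tmc.fv, Tm.fv, ih]

lemma Tmc.substFv_toTmc {n : ℕ} (σ : ℕ → Tm F far) (t : Tm F far) :
    (t.toTmc : Tmc F far n).substFv σ = (t.subst σ).toTmc := by
  induction t with
  | fvar x => rfl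
  | app f a ih => simp [Tm.toTmc, Tmc.substFv, Tm.subst, ih]

lemma Tmc.bsubst_toTmc {m k : ℕ} (θ : Fin m → Tmc F far k) (t : Tm F far) :
    (t.toTmc : Tmc F far m).bsubst θ = t.toTmc := by
  induction t with
  | fvar x => rfl
  | app f a ih => simp [Tm.toTmc, Tmc.bsubst, ih]

lemma Tmc.shift_toTmc {k : ℕ} (t : Tm F far) :
    (t.toTmc : Tmc F far k).shift = t.toTmc := by
  induction t with
  | fvar x => rfl
  | app f a ih => simp [Tm.toTmc, Tmc.shift, ih]

lemma Tmc.bsubst_toTmc_eval {m k : ℕ} (μ : Fin m → Tm F far) (t : Tmc F far m) :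
    t.bsubst (fun i => ((μ i).toTmc : Tmc F far k)) = (t.eval Tm.fvar μ).toTmc := by
  induction t with
  | app f a ih => simp [Tmc.bsubst, Tmc.eval, Tm.toTmc, ih]
  | _ => rfl

lemma Tmc.substFv_congr {n : ℕ} {σ σ' : ℕ → Tm F far} {t : Tmc F far n}
    (h : ∀ x ∈ t.fv, σ x = σ' x) : t.substFv σ = t.substFv σ' := by
  induction t with
  | fvar x => simp [Tmc.substFv, h x rfl]
  | bvar i => rfl
  | app f a ih =>
    simp only [Tmc.substFv, Tmc.fv, Set.mem_iUnion] at h ⊢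
    exact congrArg _ (funext fun i => ih i fun x hx => h x ⟨i, hx⟩)

lemma Tmc.substFv_fvar {n : ℕ} (t : Tmc F far n) : t.substFv Tm.fvar = t := by
  induction t with
  | app f a ih => simp [Tmc.substFv, ih]
  | _ => rfl

lemma Tmc.fv_substFv_subset {n : ℕ} {σ : ℕ → Tm F far} {S : Set ℕ} {t : Tmc F far n}
    (hσ : ∀ x ∈ t.fv, (σ x).fv ⊆ S) : (t.substFv σ).fv ⊆ S := by
  induction t with
  | fvar x => simpa [Tmc.substFv, Tmc.fv_toTmc, Tmc.fv] using hσ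
  | bvar i => simp [Tmc.substFv, Tmc.fv]
  | app f a ih =>
    simp only [Tmc.substFv, Tmc.fv, Set.mem_iUnion, Set.iUnion_subset_iff] at hσ ⊢
    exact fun i => ih i fun x hx => hσ x ⟨i, hx⟩

lemma Tmc.substFv_bsubst {m k : ℕ} (σ : ℕ → Tm F far) (θ : Fin m → Tmc F far k)
    (t : Tmc F far m) :
    (t.bsubst θ).substFv σ = (t.substFv σ).bsubst (fun i => (θ i).substFv σ) := by
  induction t with
  | fvar x => exact (Tmc.bsubst_toTmc _ _).symm
  | bvar i => rfl
  | app f a ih => simp [Tmc.bsubst, Tmc.substFv, ih]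

lemma Tmc.shift_substFv {k : ℕ} (σ : ℕ → Tm F far) (t : Tmc F far k) :
    t.shift.substFv σ = (t.substFv σ).shift := by
  induction t with
  | fvar x => exact (Tmc.shift_toTmc _).symm
  | bvar i => rfl
  | app f a ih => simp [Tmc.shift, Tmc.substFv, ih]

lemma Tmc.substFv_substFv {n : ℕ} (σ σ' : ℕ → Tm F far) (t : Tmc F far n) :
    (t.substFv σ).substFv σ' = t.substFv (fun x => (σ x).subst σ') := by
  induction t with
  | fvar x => exact Tmc.substFv_toTmc _ _
  | bvar i => rfl
  | app f a ih => simp [Tmc.substFv, ih]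

lemma Tmc.bsubst_bsubst {m k l : ℕ} (θ : Fin m → Tmc F far k)
    (θ' : Fin k → Tmc F far l) (t : Tmc F far m) :
    (t.bsubst θ).bsubst θ' = t.bsubst (fun i => (θ i).bsubst θ') := by
  induction t with
  | app f a ih => simp [Tmc.bsubst, ih]
  | _ => rfl

lemma Tmc.shift_bsubst {k l : ℕ} (θ : Fin (k + 1) → Tmc F far l) (t : Tmc F far k) :
    t.shift.bsubst θ = t.bsubst (fun i => θ i.castSucc) := by
  induction t with
  | app f a ih => simp [Tmc.shift, Tmc.bsubst, ih]
  | _ => rfl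

lemma Tmc.bsubst_shift {m k : ℕ} (θ : Fin m → Tmc F far k) (t : Tmc F far m) :
    (t.bsubst θ).shift = t.bsubst (fun i => (θ i).shift) := by
  induction t with
  | app f a ih => simp [Tmc.bsubst, Tmc.shift, ih]
  | _ => rfl

lemma Tmc.bsubst_bvar {m : ℕ} (t : Tmc F far m) : t.bsubst (fun i => .bvar i) = t := by
  induction t with
  | app f a ih => simp [Tmc.bsubst, ih]
  | _ => rfl

lemma Tmc.fv_bsubst_subset {m k : ℕ} (θ : Fin m → Tmc F far k) (t : Tmc F far m) :
    (t.bsubst θ).fv ⊆ t.fv ∪ ⋃ i, (θ i).fv := by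
  induction t with
  | fvar x => exact Set.subset_union_left
  | bvar i => exact Set.subset_union_of_subset_right (Set.subset_iUnion (fun i => (θ i).fv) i) _
  | app f a ih =>
    simp only [Tmc.bsubst, Tmc.fv, Set.iUnion_subset_iff]
    exact fun i => (ih i).trans
      (Set.union_subset_union_left _ (Set.subset_iUnion (fun i => (a i).fv) i))

lemma Tmc.fv_shift {k : ℕ} (t : Tmc F far k) : t.shift.fv = t.fv := by
  induction t with
  | app f a ih => simp [Tmc.shift, Tmc.fv, ih]
  | _ => rfl

lemma Tmc.fv_eq_empty_of_noFvar {n : ℕ} {t : Tmc F far n} (h : t.noFvar) : t.fv = ∅ := by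
  induction t with
  | fvar x => exact h.elim
  | bvar i => rfl
  | app f a ih => simpa [Tmc.fv] using fun i => ih i (h i)

lemma fv_append_fvar_subset {X : Finset ℕ} {m k : ℕ} {θ : Fin m → Tm F far}
    (hθ : ∀ i, (θ i).fv ⊆ X) (v : Fin k → ℕ) (i : Fin (m + k)) :
    (Fin.append θ (fun j => Tm.fvar (v j)) i).fv ⊆ ↑(X ∪ Finset.univ.image v) := by
  refine Fin.addCases (fun i => ?_) (fun j => ?_) i
  · rw [Fin.append_left, Finset.coe_union]
    exact (hθ i).trans Set.subset_union_left
  · simp [Tm.fv]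

lemma snoc_append_fvar {m k : ℕ} (θ : Fin m → Tm F far) (v : Fin (k + 1) → ℕ) :
    Fin.snoc (fun i => (Fin.append θ (fun j => Tm.fvar (v j.castSucc)) i).toTmc)
        ((Tm.fvar (v (Fin.last k))).toTmc : Tmc F far 0) =
      fun i => (Fin.append θ (fun j => Tm.fvar (v j)) i).toTmc := by
  have hv : Fin.snoc (fun j => Tm.fvar (v j.castSucc)) (Tm.fvar (v (Fin.last k))) =
      fun j => Tm.fvar (F := F) (far := far) (v j) := by
    funext j
    induction j using Fin.lastCases <;> simp
  rw [← Function.comp_def Tm.toTmc, ← Fin.comp_snoc, ← Fin.append_snoc, hv]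
  rfl

lemma extendB_substFv {m k : ℕ} (σ : ℕ → Tm F far) (θ : Fin m → Tmc F far k) :
    (fun i => (extendB θ i).substFv σ) = extendB (fun i => (θ i).substFv σ) := by
  funext i
  induction i using Fin.lastCases with
  | last => simp [extendB, Tmc.substFv]
  | cast i => simp [extendB, Tmc.shift_substFv]

lemma extendB_bsubst {m k l : ℕ} (θ : Fin m → Tmc F far k) (θ' : Fin k → Tmc F far l) :
    (fun i => (extendB θ i).bsubst (extendB θ')) = extendB (fun i => (θ i).bsubst θ') := by
  funext i
  induction i using Fin.lastCases with
  | last => simp [extendB, Tmc.bsubst]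
  | cast i => simp [extendB, Tmc.shift_bsubst, Tmc.bsubst_shift]

lemma extendB_bvar {m : ℕ} :
    extendB (fun i : Fin m => (.bvar i : Tmc F far m)) = fun i => .bvar i := by
  funext i
  induction i using Fin.lastCases with
  | last => simp [extendB]
  | cast i => simp [extendB, Tmc.shift]

lemma iUnion_fv_extendB {m k : ℕ} (θ : Fin m → Tmc F far k) :
    ⋃ i, (extendB θ i).fv = ⋃ i, (θ i).fv := by
  simp [Set.iUnion_fin_add_one_eq_iUnion_castSucc, Function.comp_def, extendB, Tmc.fv,
    Tmc.fv_shift]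

lemma Fml.substFv_congr {n : ℕ} {φ : Fml F far R rar n} {σ σ' : ℕ → Tm F far}
    (h : ∀ x ∈ φ.fv, σ x = σ' x) : φ.substFv σ = φ.substFv σ' := by
  induction φ with
  | atom r ts =>
    simp only [Fml.fv, Set.mem_iUnion] at h
    simp only [Fml.substFv]
    exact congrArg _ (funext fun i => Tmc.substFv_congr fun x hx => h x ⟨i, hx⟩)
  | eq s t =>
    simp only [Fml.substFv, Tmc.substFv_congr fun x hx => h x (Or.inl hx),
      Tmc.substFv_congr fun x hx => h x (Or.inr hx)]
  | top | bot => rfl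
  | conj φ ψ ihφ ihψ | imp φ ψ ihφ ihψ =>
    simp only [Fml.substFv, ihφ fun x hx => h x (Or.inl hx), ihψ fun x hx => h x (Or.inr hx)]
  | disj I f ih =>
    simp only [Fml.fv, Set.mem_iUnion] at h
    simp only [Fml.substFv]
    exact congrArg _ (funext fun i => ih i fun x hx => h x ⟨i, hx⟩)
  | all φ ih | ex φ ih => simp only [Fml.substFv, ih h]

lemma Fml.substFv_fvar {n : ℕ} (φ : Fml F far R rar n) : φ.substFv Tm.fvar = φ := by
  induction φ <;> simp [Fml.substFv, Tmc.substFv_fvar, *]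

lemma Fml.substFv_eq_self {n : ℕ} {φ : Fml F far R rar n} {σ : ℕ → Tm F far}
    (h : ∀ x ∈ φ.fv, σ x = Tm.fvar x) : φ.substFv σ = φ := by
  rw [Fml.substFv_congr h, Fml.substFv_fvar]

lemma Fml.substFv_substFv (σ σ' : ℕ → Tm F far) {n : ℕ} (φ : Fml F far R rar n) :
    (φ.substFv σ).substFv σ' = φ.substFv (fun x => (σ x).subst σ') := by
  induction φ <;> simp [Fml.substFv, Tmc.substFv_substFv, *]

lemma Fml.fv_substFv_subset {n : ℕ} {φ : Fml F far R rar n} {σ : ℕ → Tm F far}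
    {S : Set ℕ} (hσ : ∀ x ∈ φ.fv, (σ x).fv ⊆ S) : (φ.substFv σ).fv ⊆ S := by
  induction φ with
  | atom r ts =>
    simp only [Fml.substFv, Fml.fv, Set.mem_iUnion, Set.iUnion_subset_iff] at hσ ⊢
    exact fun i => Tmc.fv_substFv_subset fun x hx => hσ x ⟨i, hx⟩
  | eq s t =>
    exact Set.union_subset (Tmc.fv_substFv_subset fun x hx => hσ x (Or.inl hx))
      (Tmc.fv_substFv_subset fun x hx => hσ x (Or.inr hx))
  | top | bot => simp [Fml.substFv, Fml.fv]
  | conj φ ψ ihφ ihψ | imp φ ψ ihφ ihψ =>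
    exact Set.union_subset (ihφ fun x hx => hσ x (Or.inl hx)) (ihψ fun x hx => hσ x (Or.inr hx))
  | disj I f ih =>
    simp only [Fml.substFv, Fml.fv, Set.mem_iUnion, Set.iUnion_subset_iff] at hσ ⊢
    exact fun i => ih i fun x hx => hσ x ⟨i, hx⟩
  | all φ ih | ex φ ih => exact ih hσ

lemma Fml.notMem_fv_substFv {n : ℕ} {σ : ℕ → Tm F far} {X : Finset ℕ} (hσ : ∀ x, (σ x).fv ⊆ X)
    {x : ℕ} (hx : x ∉ X) (χ : Fml F far R rar n) : x ∉ (χ.substFv σ).fv :=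
  fun hmem => hx (Fml.fv_substFv_subset (fun y _ => hσ y) hmem)

lemma Fml.substFv_update_of_notMem {n : ℕ} {φ : Fml F far R rar n} {x : ℕ}
    (hx : x ∉ φ.fv) (σ : ℕ → Tm F far) (t : Tm F far) :
    φ.substFv (Function.update σ x t) = φ.substFv σ :=
  Fml.substFv_congr fun _ hy => Function.update_of_ne (ne_of_mem_of_not_mem hy hx) _ _

lemma Fml.image_substFv_update {Γ : Set (Fml F far R rar 0)} {x : ℕ} (hΓ : ∀ χ ∈ Γ, x ∉ χ.fv)
    (σ : ℕ → Tm F far) (t : Tm F far) :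
    Fml.substFv (Function.update σ x t) '' Γ = Fml.substFv σ '' Γ :=
  Set.image_congr fun χ hχ => Fml.substFv_update_of_notMem (hΓ χ hχ) σ t

lemma Fml.substFv_bsubst {m k : ℕ} (σ : ℕ → Tm F far) (θ : Fin m → Tmc F far k)
    (φ : Fml F far R rar m) :
    (φ.bsubst θ).substFv σ = (φ.substFv σ).bsubst (fun i => (θ i).substFv σ) := by
  induction φ generalizing k with
  | all φ ih | ex φ ih => simp [Fml.bsubst, Fml.substFv, ih, extendB_substFv]
  | _ => simp [Fml.bsubst, Fml.substFv, Tmc.substFv_bsubst, *]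

lemma Fml.bsubst_bsubst {m k l : ℕ} (θ : Fin m → Tmc F far k)
    (θ' : Fin k → Tmc F far l) (φ : Fml F far R rar m) :
    (φ.bsubst θ).bsubst θ' = φ.bsubst (fun i => (θ i).bsubst θ') := by
  induction φ generalizing k l with
  | all φ ih | ex φ ih => simp [Fml.bsubst, ih, extendB_bsubst]
  | _ => simp [Fml.bsubst, Tmc.bsubst_bsubst, *]

lemma Fml.bsubst_bvar {m : ℕ} (φ : Fml F far R rar m) : φ.bsubst (fun i => .bvar i) = φ := by
  induction φ <;> simp [Fml.bsubst, Tmc.bsubst_bvar, extendB_bvar, *]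

lemma Fml.bsubst_fin_zero (θ : Fin 0 → Tmc F far 0) (φ : Fml F far R rar 0) :
    φ.bsubst θ = φ := by
  rw [Subsingleton.elim θ (fun i => .bvar i), Fml.bsubst_bvar]

lemma Fml.fv_bsubst_subset {m k : ℕ} (θ : Fin m → Tmc F far k) (φ : Fml F far R rar m) :
    (φ.bsubst θ).fv ⊆ φ.fv ∪ ⋃ i, (θ i).fv := by
  induction φ generalizing k with
  | atom r ts =>
    simp only [Fml.bsubst, Fml.fv, Set.iUnion_subset_iff]
    exact fun i => (Tmc.fv_bsubst_subset θ (ts i)).trans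
      (Set.union_subset_union_left _ (Set.subset_iUnion (fun i => (ts i).fv) i))
  | eq s t =>
    have hs := Tmc.fv_bsubst_subset θ s
    have ht := Tmc.fv_bsubst_subset θ t
    simp only [Fml.bsubst, Fml.fv]
    grind
  | top | bot => simp [Fml.bsubst, Fml.fv]
  | conj φ ψ ihφ ihψ | imp φ ψ ihφ ihψ =>
    have hφ := ihφ θ
    have hψ := ihψ θ
    simp only [Fml.bsubst, Fml.fv]
    grind
  | disj I f ih =>
    simp only [Fml.bsubst, Fml.fv, Set.iUnion_subset_iff]
    exact fun i => (ih i θ).trans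
      (Set.union_subset_union_left _ (Set.subset_iUnion (fun i => (f i).fv) i))
  | all φ ih | ex φ ih => simpa only [Fml.bsubst, Fml.fv, iUnion_fv_extendB] using ih (extendB θ)

lemma Fml.fv_bsubst_toTmc_subset {m k : ℕ} {φ : Fml F far R rar m} {θ : Fin m → Tm F far}
    {S : Set ℕ} (hφ : φ.fv ⊆ S) (hθ : ∀ i, (θ i).fv ⊆ S) :
    (φ.bsubst fun i => ((θ i).toTmc : Tmc F far k)).fv ⊆ S :=
  (Fml.fv_bsubst_subset _ φ).trans
    (Set.union_subset hφ (Set.iUnion_subset fun i => (Tmc.fv_toTmc (θ i)).trans_subset (hθ i)))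

lemma Fml.open0_bsubst_extendB {m : ℕ} (θ : Fin m → Tmc F far 0) (t : Tm F far)
    (φ : Fml F far R rar (m + 1)) :
    Fml.open0 t (φ.bsubst (extendB θ)) = φ.bsubst (Fin.snoc θ t.toTmc) := by
  rw [Fml.open0, Fml.bsubst_bsubst]
  congr 1
  funext i
  induction i using Fin.lastCases with
  | last => simp [extendB, Tmc.bsubst]
  | cast i =>
    rw [extendB, Fin.snoc_castSucc, Fin.snoc_castSucc, Tmc.shift_bsubst,
      Subsingleton.elim (fun j : Fin 0 => _) (fun j => .bvar j), Tmc.bsubst_bvar]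

lemma Fml.open0_substFv (σ : ℕ → Tm F far) (t : Tm F far) (φ : Fml F far R rar 1) :
    (Fml.open0 t φ).substFv σ = Fml.open0 (t.subst σ) (φ.substFv σ) := by
  simp only [Fml.open0, Fml.substFv_bsubst, Tmc.substFv_toTmc]

lemma Fml.open0_fvar_substFv_update {φ : Fml F far R rar 1} {x : ℕ} (hx : x ∉ φ.fv)
    (σ : ℕ → Tm F far) (t : Tm F far) :
    (Fml.open0 (.fvar x) φ).substFv (Function.update σ x t) = Fml.open0 t (φ.substFv σ) := by
  rw [Fml.open0_substFv, Fml.substFv_update_of_notMem hx]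
  simp [Tm.subst]

lemma Fml.fv_alls (m : ℕ) (φ : Fml F far R rar m) : (Fml.alls m φ).fv = φ.fv := by
  induction m with
  | zero => rfl
  | succ m ih => exact ih (.all φ)

lemma Fml.fv_exs (k : ℕ) {m : ℕ} (φ : Fml F far R rar (m + k)) : (Fml.exs k φ).fv = φ.fv := by
  induction k with
  | zero => rfl
  | succ k ih => exact ih (.ex φ)

lemma fv_listConj {n : ℕ} {l : List (CAtom F far R rar n)}
    (h : ∀ a ∈ l, ∀ i, (a.2 i).noFvar) : (listConj l).fv = ∅ := by
  induction l with
  | nil => rfl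
  | cons a l ih =>
    simp only [List.mem_cons, forall_eq_or_imp] at h
    simp only [listConj, List.foldr_cons, Fml.fv, Tmc.fv_eq_empty_of_noFvar (h.1 _),
      Set.iUnion_empty, Set.empty_union]
    exact ih h.2

lemma CohAx.fv_toFml (ax : CohAx F far R rar) : ax.toFml.fv = ∅ := by
  simp only [CohAx.toFml, Fml.fv_alls, Fml.fv, fv_listConj ax.hypClosed, Fml.fv_exs]
  simp only [Set.empty_union, Set.iUnion_eq_empty]
  exact fun i => fv_listConj fun a ha => ax.conclClosed _ (List.get_mem _ i) a ha

lemma atomF_fv (a : Atom F far R rar) : (atomF a).fv = Atom.fv a := by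
  simp [atomF, Fml.fv, Atom.fv, Tmc.fv_toTmc]

lemma atomF_substFv (σ : ℕ → Tm F far) (a : Atom F far R rar) :
    (atomF a).substFv σ = atomF (Atom.subst σ a) := by
  simp [atomF, Fml.substFv, Atom.subst, Tmc.substFv_toTmc]

lemma Atom.subst_eq_self {σ : ℕ → Tm F far} {a : Atom F far R rar}
    (h : ∀ x ∈ Atom.fv a, σ x = Tm.fvar x) : Atom.subst σ a = a := by
  simp only [Atom.fv, Set.mem_iUnion] at h
  obtain ⟨r, ts⟩ := a
  simp only [Atom.subst, Sigma.mk.injEq, heq_eq_eq, true_and]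
  exact funext fun i => (Tm.subst_congr fun x hx => h x ⟨i, hx⟩).trans (Tm.subst_fvar _)

lemma Fml.bsubst_atom_toTmc {m : ℕ} (μ : Fin m → Tm F far) (a : CAtom F far R rar m) :
    (Fml.atom a.1 a.2).bsubst (fun i => (μ i).toTmc) = atomF (CAtom.inst μ a) := by
  simp [Fml.bsubst, atomF, CAtom.inst, Tmc.bsubst_toTmc_eval]

def Cond.ctx (T : Set (CohAx F far R rar)) (C : Cond F far R rar) : Set (Fml F far R rar 0) :=
  CohAx.toFml '' T ∪ atomF '' C.A

lemma Cond.fv_subset_of_mem_ctx {T : Set (CohAx F far R rar)} {C : Cond F far R rar}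
    {χ : Fml F far R rar 0} (hχ : χ ∈ C.ctx T) : χ.fv ⊆ C.X := by
  rcases hχ with ⟨ax, -, rfl⟩ | ⟨a, ha, rfl⟩
  · simp [CohAx.fv_toFml]
  · exact (atomF_fv a).trans_subset (C.wf a ha)

namespace Prv

variable {em : Prop} {X : Finset ℕ} {Γ Γ' : Set (Fml F far R rar 0)} {φ ψ : Fml F far R rar 0}

/-- Weakening needs the added hypotheses to live over `X`: otherwise they could capture the
eigenvariable of a `∀`-introduction or `∃`-elimination. -/
lemma mono (h : Prv em X Γ φ) (hsub : Γ ⊆ Γ') (hΓ' : Γ' ⊆ Γ ∪ {χ | χ.fv ⊆ X}) :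
    Prv em X Γ' φ := by
  have over_insert : ∀ {X : Finset ℕ} (x : ℕ), {χ : Fml F far R rar 0 | χ.fv ⊆ X} ⊆
      {χ | χ.fv ⊆ ↑(insert x X)} := fun x χ hχ =>
    hχ.trans (Finset.coe_subset.mpr (Finset.subset_insert x _))
  induction h generalizing Γ' with
  | ax h => exact .ax (hsub h)
  | topI => exact .topI
  | botE _ ih => exact .botE (ih hsub hΓ')
  | conjI _ _ ih₁ ih₂ => exact .conjI (ih₁ hsub hΓ') (ih₂ hsub hΓ')
  | conjE1 _ ih => exact .conjE1 (ih hsub hΓ')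
  | conjE2 _ ih => exact .conjE2 (ih hsub hΓ')
  | disjI i _ ih => exact .disjI i (ih hsub hΓ')
  | disjE _ _ ih₁ ih₂ =>
    exact .disjE (ih₁ hsub hΓ') fun i => ih₂ i (Set.insert_subset_insert hsub)
      ((Set.insert_subset_insert hΓ').trans Set.insert_union.superset)
  | impI _ ih =>
    exact .impI (ih (Set.insert_subset_insert hsub)
      ((Set.insert_subset_insert hΓ').trans Set.insert_union.superset))
  | impE _ _ ih₁ ih₂ => exact .impE (ih₁ hsub hΓ') (ih₂ hsub hΓ')
  | allI x hx hφ hΓ _ ih =>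
    refine .allI x hx hφ (fun χ hχ => (hΓ' hχ).elim (hΓ χ) fun h hmem => hx (h hmem)) ?_
    exact ih hsub (hΓ'.trans (Set.union_subset_union_right _ (over_insert x)))
  | allE t ht _ ih => exact .allE t ht (ih hsub hΓ')
  | exI t ht _ ih => exact .exI t ht (ih hsub hΓ')
  | exE x hx hφ hψ hΓ _ _ ih₁ ih₂ =>
    refine .exE x hx hφ hψ (fun χ hχ => (hΓ' hχ).elim (hΓ χ) fun h hmem => hx (h hmem))
      (ih₁ hsub hΓ') (ih₂ (Set.insert_subset_insert hsub) ?_)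
    exact (Set.insert_subset_insert (hΓ'.trans (Set.union_subset_union_right _
      (over_insert x)))).trans Set.insert_union.superset
  | em φ h => exact .em φ h

lemma mono_of_fv_subset (h : Prv em X Γ φ) (hsub : Γ ⊆ Γ') (hΓ' : ∀ χ ∈ Γ', χ.fv ⊆ X) :
    Prv em X Γ' φ :=
  h.mono hsub fun χ hχ => Or.inr (hΓ' χ hχ)

lemma cut_of_finite {Δ : Set (Fml F far R rar 0)} (hΔ : Δ.Finite) (h : Prv em X (Γ ∪ Δ) ψ)
    (hΓΔ : ∀ χ ∈ Δ, Prv em X Γ χ) : Prv em X Γ ψ := by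
  induction Δ, hΔ using Set.Finite.induction_on generalizing ψ with
  | empty => simpa using h
  | @insert χ Δ _ _ ih =>
    rw [Set.union_insert] at h
    exact (ih (h.impI) fun ξ hξ => hΓΔ ξ (Set.mem_insert_of_mem _ hξ)).impE
      (hΓΔ χ (Set.mem_insert _ _))

/-- Eigenvariables are renamed to variables outside `X'`, which are fresh for everything in
the substituted derivation because all of `σ` lands in `X'`. -/
lemma substFv (h : Prv em X Γ φ) {σ : ℕ → Tm F far} {X' : Finset ℕ}
    (hσ : ∀ x, (σ x).fv ⊆ X') : Prv em X' (Fml.substFv σ '' Γ) (φ.substFv σ) := by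
  induction h generalizing σ X' with
  | ax h => exact .ax (Set.mem_image_of_mem _ h)
  | topI => exact .topI
  | botE _ ih => exact .botE (ih hσ)
  | conjI _ _ ih₁ ih₂ => exact .conjI (ih₁ hσ) (ih₂ hσ)
  | conjE1 _ ih => exact .conjE1 (ih hσ)
  | conjE2 _ ih => exact .conjE2 (ih hσ)
  | disjI i _ ih => exact .disjI i (ih hσ)
  | disjE _ _ ih₁ ih₂ =>
    refine .disjE (ih₁ hσ) fun i => ?_
    simpa only [Set.image_insert_eq] using ih₂ i hσ
  | impI _ ih => exact .impI (by simpa only [Set.image_insert_eq] using ih hσ)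
  | impE _ _ ih₁ ih₂ => exact .impE (ih₁ hσ) (ih₂ hσ)
  | @allI X Γ φ x hx hφ hΓ _ ih =>
    obtain ⟨x', hx'⟩ := Infinite.exists_notMem_finset X'
    have hσ' := fv_update_fvar_subset hσ x x'
    have key := ih hσ'
    rw [Fml.image_substFv_update hΓ, Fml.open0_fvar_substFv_update hφ] at key
    refine .allI x' hx' (Fml.notMem_fv_substFv hσ hx' (.all φ)) ?_ key
    rintro _ ⟨χ, -, rfl⟩
    exact Fml.notMem_fv_substFv hσ hx' χ
  | allE t ht _ ih =>
    simpa only [Fml.open0_substFv] using .allE (t.subst σ) (Tm.fv_subst_subset hσ t) (ih hσ)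
  | exI t ht _ ih =>
    refine .exI (t.subst σ) (Tm.fv_subst_subset hσ t) ?_
    simpa only [Fml.open0_substFv] using ih hσ
  | @exE X Γ φ ψ x hx hφ hψ hΓ _ _ ih₁ ih₂ =>
    obtain ⟨x', hx'⟩ := Infinite.exists_notMem_finset X'
    have key := ih₂ (fv_update_fvar_subset hσ x x')
    rw [Set.image_insert_eq, Fml.image_substFv_update hΓ, Fml.open0_fvar_substFv_update hφ,
      Fml.substFv_update_of_notMem hψ] at key
    exact .exE x' hx' (Fml.notMem_fv_substFv hσ hx' (.ex φ)) (Fml.notMem_fv_substFv hσ hx' ψ)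
      (by rintro _ ⟨χ, -, rfl⟩; exact Fml.notMem_fv_substFv hσ hx' χ) (ih₁ hσ) key
  | em φ h =>
    convert Prv.em (φ.substFv σ) h using 1
    simp only [Fml.substFv]
    congr 1
    funext b
    cases b <;> rfl

lemma bsubst_of_alls {m : ℕ} {φ : Fml F far R rar m} {θ : Fin m → Tm F far}
    (hθ : ∀ i, (θ i).fv ⊆ X) (h : Prv em X Γ (Fml.alls m φ)) :
    Prv em X Γ (φ.bsubst fun i => (θ i).toTmc) := by
  induction m with
  | zero => rwa [Fml.bsubst_fin_zero]
  | succ m ih =>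
    have := (ih (φ := .all φ) (fun i => hθ i.castSucc) h).allE (θ (Fin.last m)) (hθ _)
    rw [Fml.open0_bsubst_extendB, ← Function.comp_def Tm.toTmc, ← Fin.comp_snoc,
      show Fin.snoc (fun i => θ i.castSucc) (θ (Fin.last m)) = θ from Fin.snoc_init_self θ] at this
    exact this

lemma listConj_bsubst {m : ℕ} (μ : Fin m → Tm F far) {l : List (CAtom F far R rar m)}
    (h : ∀ a ∈ l, Prv em X Γ (atomF (CAtom.inst μ a))) :
    Prv em X Γ ((listConj l).bsubst fun i => (μ i).toTmc) := by
  induction l with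
  | nil => exact .topI
  | cons a l ih =>
    simp only [List.mem_cons, forall_eq_or_imp] at h
    refine .conjI ?_ (ih h.2)
    rw [Fml.bsubst_atom_toTmc]
    exact h.1

lemma atomF_inst_of_listConj {m : ℕ} (μ : Fin m → Tm F far) {l : List (CAtom F far R rar m)}
    (h : Prv em X Γ ((listConj l).bsubst fun i => (μ i).toTmc)) :
    ∀ a ∈ l, Prv em X Γ (atomF (CAtom.inst μ a)) := by
  induction l with
  | nil => simp
  | cons b l ih =>
    simp only [List.mem_cons, forall_eq_or_imp]
    refine ⟨?_, ih h.conjE2⟩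
    rw [← Fml.bsubst_atom_toTmc]
    exact h.conjE1

lemma exs_elim (hΓ : ∀ χ ∈ Γ, χ.fv ⊆ X) (hψ : ψ.fv ⊆ X) {k m : ℕ}
    {θ : Fin m → Tm F far} (hθ : ∀ i, (θ i).fv ⊆ X) {L : Fml F far R rar (m + k)}
    (hL : L.fv ⊆ X) {v : Fin k → ℕ} (hv : Function.Injective v) (hvX : ∀ i, v i ∉ X)
    (h : Prv em X Γ ((Fml.exs k L).bsubst fun i => (θ i).toTmc))
    (hcont : Prv em (X ∪ Finset.univ.image v)
      (insert (L.bsubst fun i => (Fin.append θ (fun j => Tm.fvar (v j)) i).toTmc) Γ) ψ) :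
    Prv em X Γ ψ := by
  induction k with
  | zero =>
    have hX : X ∪ Finset.univ.image v = X := by simp
    rw [hX, Fin.append_right_nil _ _ rfl] at hcont
    exact hcont.impI.impE h
  | succ k ih =>
    refine ih (L := Fml.ex (n := m + k) L) (v := fun j => v j.castSucc) hL
      (hv.comp (Fin.castSucc_injective k)) (fun i => hvX _) h ?_
    set X' := X ∪ Finset.univ.image fun j : Fin k => v j.castSucc
    have hXX' : (X : Set ℕ) ⊆ X' := by simp [X']
    have hE := Fml.fv_bsubst_toTmc_subset (φ := Fml.ex (n := m + k) L) (k := 0) (hL.trans hXX')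
      (fv_append_fvar_subset hθ _)
    have hx : v (Fin.last k) ∉ X' := by
      simp [X', hvX, hv.eq_iff, Fin.castSucc_ne_last]
    have hX'' : insert (v (Fin.last k)) X' = X ∪ Finset.univ.image v := by
      ext y
      simp only [X', Finset.mem_insert, Finset.mem_union, Finset.mem_image, Finset.mem_univ,
        true_and, Fin.exists_fin_succ']
      tauto
    refine .exE (v (Fin.last k)) hx (fun hmem => hx (hE hmem)) (fun hmem => hx (hXX' (hψ hmem)))
      ?_ (.ax (Set.mem_insert _ _)) ?_
    · rintro χ (rfl | hχ) hmem
      exacts [hx (hE hmem), hx (hXX' (hΓ χ hχ hmem))]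
    · rw [Fml.open0_bsubst_extendB, snoc_append_fvar, hX'']
      refine hcont.mono_of_fv_subset (Set.insert_subset_insert (Set.subset_insert _ _)) ?_
      have hX'X : (X' : Set ℕ) ⊆ ↑(X ∪ Finset.univ.image v) := by
        rw [← hX'', Finset.coe_insert]; exact Set.subset_insert _ _
      rintro χ (rfl | rfl | hχ)
      · exact Fml.fv_bsubst_toTmc_subset (hL.trans (hXX'.trans hX'X)) (fv_append_fvar_subset hθ v)
      · exact hE.trans hX'X
      · exact (hΓ χ hχ).trans (hXX'.trans hX'X)

end Prv

lemma freshVar_notMem (C : Cond F far R rar) (j : ℕ) : freshVar C j ∉ C.X := fun h => by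
  have := Finset.le_sup (f := id) h
  simp only [id, freshVar] at this
  omega

lemma freshVar_injective (C : Cond F far R rar) : Function.Injective (freshVar C) :=
  fun _ _ h => by simpa [freshVar] using h

section

variable {em : Prop} {T : Set (CohAx F far R rar)}

/-- `τ` is extended off `D.X` by a term over `C.X`; if there is none, `C.X` and `D.X` are both
empty and nothing needs substituting. -/
lemma Prv.substFv_of_mor {mc : MC} {C D : Cond F far R rar} {τ : ℕ → Tm F far}
    (hτ : Mor mc C D τ) {φ : Fml F far R rar 0} (hφ : φ.fv ⊆ D.X)
    (h : Prv em D.X (D.ctx T) φ) : Prv em C.X (C.ctx T) (φ.substFv τ) := by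
  by_cases ht : ∃ t₀ : Tm F far, t₀.fv ⊆ C.X
  · obtain ⟨t₀, ht₀⟩ := ht
    set σ : ℕ → Tm F far := fun y => if y ∈ D.X then τ y else t₀
    have hσ : ∀ y, (σ y).fv ⊆ C.X := fun y => by
      by_cases hy : y ∈ D.X
      · simpa [σ, hy] using hτ.fvsub y hy
      · simpa [σ, hy] using ht₀
    have hστ : ∀ {χ : Fml F far R rar 0}, χ.fv ⊆ D.X → χ.substFv σ = χ.substFv τ :=
      fun hχ => Fml.substFv_congr fun y hy => if_pos (hχ hy)
    rw [← hστ hφ]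
    refine (h.substFv hσ).mono_of_fv_subset ?_ fun χ hχ => Cond.fv_subset_of_mem_ctx hχ
    rintro _ ⟨_, ⟨ax, hax, rfl⟩ | ⟨a, ha, rfl⟩, rfl⟩
    · exact Or.inl ⟨ax, hax, (Fml.substFv_eq_self (by simp [CohAx.fv_toFml])).symm⟩
    · rw [hστ ((atomF_fv a).trans_subset (D.wf a ha)), atomF_substFv]
      exact Or.inr ⟨_, hτ.atoms a ha, rfl⟩
  · have hC : C.X = ∅ := Finset.eq_empty_of_forall_notMem fun x hx => ht ⟨.fvar x, by simpa [Tm.fv]⟩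
    have hD : D.X = ∅ := Finset.eq_empty_of_forall_notMem fun y hy => ht ⟨_, hτ.fvsub y hy⟩
    rw [Fml.substFv_eq_self fun x hx => by simpa [hD] using hφ hx]
    rw [hD, ← hC] at h
    refine h.mono_of_fv_subset ?_ fun χ hχ => Cond.fv_subset_of_mem_ctx hχ
    rintro _ (hax | ⟨a, ha, rfl⟩)
    · exact Or.inl hax
    · have := hτ.atoms a ha
      rw [Atom.subst_eq_self fun x hx => by simpa [hD] using D.wf a ha hx] at this
      exact Or.inr ⟨a, this, rfl⟩

lemma Prv.of_substFv_of_leftInverse {mc : MC} {C D : Cond F far R rar} {σ τ : ℕ → Tm F far}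
    (hσ : ∀ x ∈ C.X, (σ x).fv ⊆ D.X) (hτ : Mor mc C D τ)
    (hτσ : ∀ x ∈ C.X, (σ x).subst τ = .fvar x) {ψ : Fml F far R rar 0} (hψ : ψ.fv ⊆ C.X)
    (h : Prv em D.X (D.ctx T) (ψ.substFv σ)) : Prv em C.X (C.ctx T) ψ := by
  have := h.substFv_of_mor hτ (Fml.fv_substFv_subset fun x hx => hσ x (hψ hx))
  rwa [Fml.substFv_substFv, Fml.substFv_eq_self fun x hx => hτσ x (hψ hx)] at this

lemma Cond.prv_inst_concl {C : Cond F far R rar} {ax : CohAx F far R rar} (hax : ax ∈ T)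
    {ι : Fin ax.m → Tm F far} (hι : ∀ i, (ι i).fv ⊆ C.X)
    (hhyp : ∀ a ∈ ax.hyp, CAtom.inst ι a ∈ C.A) :
    Prv em C.X (C.ctx T) (.disj (Fin ax.concl.length) fun i =>
      (Fml.exs (ax.concl.get i).1 (listConj (ax.concl.get i).2)).bsubst fun j => (ι j).toTmc) :=
  (Prv.bsubst_of_alls hι (Prv.ax (φ := ax.toFml) (Or.inl ⟨ax, hax, rfl⟩))).impE
    (Prv.listConj_bsubst ι fun a ha => .ax (Or.inr ⟨_, hhyp a ha, rfl⟩))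

lemma Cond.X_subset_extend_X (C : Cond F far R rar) {m k : ℕ} {ι : Fin m → Tm F far}
    (hι : ∀ i, (ι i).fv ⊆ C.X) (d : List (CAtom F far R rar (m + k)))
    (hd : ∀ a ∈ d, ∀ i, (a.2 i).noFvar) : (C.X : Set ℕ) ⊆ (C.extend ι hι d hd).X := by
  simp [Cond.extend]

lemma Cond.prv_of_prv_extend {C : Cond F far R rar} {ψ : Fml F far R rar 0}
    (hψ : ψ.fv ⊆ C.X) {m k : ℕ} {ι : Fin m → Tm F far} (hι : ∀ i, (ι i).fv ⊆ C.X)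
    {d : List (CAtom F far R rar (m + k))} (hd : ∀ a ∈ d, ∀ i, (a.2 i).noFvar)
    (h : Prv em (C.extend ι hι d hd).X ((C.extend ι hι d hd).ctx T) ψ) :
    Prv em C.X (insert ((Fml.exs k (listConj d)).bsubst fun i => (ι i).toTmc) (C.ctx T)) ψ := by
  set C' := C.extend ι hι d hd
  have hCC' := C.X_subset_extend_X hι d hd
  have hΓX : ∀ χ ∈ insert ((Fml.exs k (listConj d)).bsubst fun i => (ι i).toTmc) (C.ctx T),
      χ.fv ⊆ C.X := by
    rintro χ (rfl | hχ)
    · exact Fml.fv_bsubst_toTmc_subset (by simp [Fml.fv_exs, fv_listConj hd]) hι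
    · exact Cond.fv_subset_of_mem_ctx hχ
  refine Prv.exs_elim hΓX hψ hι (by simp [fv_listConj hd]) (v := fun j => freshVar C j)
    ((freshVar_injective C).comp Fin.val_injective) (fun j => freshVar_notMem C j)
    (.ax (Set.mem_insert _ _)) ?_
  refine Prv.cut_of_finite (C'.finA.image atomF) (h.mono_of_fv_subset ?_ ?_) ?_
  · rintro χ (hχ | hχ)
    exacts [Or.inl (Set.mem_insert_of_mem _ (Set.mem_insert_of_mem _ (Or.inl hχ))), Or.inr hχ]
  · rintro χ ((rfl | hχ) | ⟨a, ha, rfl⟩)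
    · exact Fml.fv_bsubst_toTmc_subset (by simp [fv_listConj hd]) (fv_append_fvar_subset hι _)
    · exact (hΓX χ hχ).trans hCC'
    · exact (atomF_fv a).trans_subset (C'.wf a ha)
  · rintro _ ⟨a, ha | ⟨b, hb, rfl⟩, rfl⟩
    · exact .ax (Set.mem_insert_of_mem _ (Set.mem_insert_of_mem _ (Or.inr ⟨a, ha, rfl⟩)))
    · exact Prv.atomF_inst_of_listConj _ (.ax (Set.mem_insert _ _)) b hb

end

theorem local_character_of_provability (T : Set (CohAx F far R rar))
    {C : Cond F far R rar} {U : Sink F far R rar} (hCU : Cov T C U)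
    (ψ : Fml F far R rar 0) (hψ : Fml.fv ψ ⊆ ↑C.X)
    (h : ∀ p ∈ U,
      Prv False p.1.X (CohAx.toFml '' T ∪ atomF '' p.1.A) (Fml.substFv p.2 ψ)) :
    Prv False C.X (CohAx.toFml '' T ∪ atomF '' C.A) ψ := by
  induction hCU with
  | iso hσ =>
    obtain ⟨hσ, τ, hτ, hτσ, -⟩ := hσ
    exact Prv.of_substFv_of_leftInverse hσ.fvsub hτ hτσ hψ (h _ rfl)
  | @step C ax hax ι hι hhyp _ _ ih =>
    refine (Cond.prv_inst_concl hax hι hhyp).disjE fun i =>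
      Cond.prv_of_prv_extend hψ hι (ax.conclClosed _ (List.get_mem _ i)) ?_
    exact ih i (hψ.trans (C.X_subset_extend_X hι _ _)) fun p hp => h p (Set.mem_iUnion.mpr ⟨i, hp⟩)

end CoherentForcing
end
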